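/- A nonzero Banach space X has the Daugavet property if and only if for every x in the unit sphere S(X) and every ε > 0, the closed unit ball B(X) is contained in the closure of the convex hull of l⁺(x, ε). -/
import Mathlib
set_option maxHeartbeats 1000000

/-- For `x` in the unit sphere of `X` and `ε > 0`,
`l⁺(x, ε) = {y : ‖y‖ ≤ 1 + ε and ‖x + y‖ > 2 - ε}`. -/
def lPlus {X : Type*} [NormedAddCommGroup X] (x : X) (ε : ℝ) : Set X :=
  {y : X | ‖y‖ ≤ 1 + ε ∧ 2 - ε < ‖x + y‖}

lemma lPlus_key {X : Type*} [NormedAddCommGroup X] [NormedSpace ℝ X]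
    {x y0 : X} {s ε : ℝ} (hx : ‖x‖ = 1) (hy : ‖y0‖ ≤ 1 + ε) (hxy : 2 - ε < ‖x + y0‖)
    (hs : 0 ≤ s) (hε : 0 ≤ ε) : 1 + s - (1 + 2*s)*ε ≤ ‖y0 + s • x‖ := by
  rcases le_or_gt s 1 with h1 | h1
  · have h2 : ‖y0 + x‖ ≤ ‖y0 + s • x‖ + ‖(1 - s) • x‖ := by
      calc ‖y0 + x‖ = ‖(y0 + s • x) + (1 - s) • x‖ := by
            rw [show (y0 + s • x) + (1-s) • x = y0 + x by module]
      _ ≤ _ := norm_add_le _ _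
    rw [norm_smul, Real.norm_eq_abs, abs_of_nonneg (by linarith : (0:ℝ) ≤ 1 - s), hx,
      add_comm y0 x] at h2
    nlinarith
  · have h2 : ‖s • (x + y0)‖ ≤ ‖y0 + s • x‖ + ‖(s - 1) • y0‖ := by
      calc ‖s • (x + y0)‖ = ‖(y0 + s • x) + (s - 1) • y0‖ := by
            rw [show (y0 + s • x) + (s-1) • y0 = s • (x + y0) by module]
      _ ≤ _ := norm_add_le _ _
    rw [norm_smul, norm_smul, Real.norm_eq_abs, Real.norm_eq_abs,
      abs_of_nonneg hs, abs_of_nonneg (by linarith : (0:ℝ) ≤ s - 1)] at h2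
    nlinarith [norm_nonneg y0]

lemma exists_ge_convexHull {X : Type*} [NormedAddCommGroup X] [NormedSpace ℝ X]
    (g : X →L[ℝ] ℝ) {S : Set X} {w : X} (hw : w ∈ convexHull ℝ S) : ∃ y ∈ S, g w ≤ g y := by
  by_contra h
  push_neg at h
  have hcv : Convex ℝ {v : X | g v < g w} :=
    convex_halfSpace_lt (IsLinearMap.mk g.map_add g.map_smul) (g w)
  have hsub : convexHull ℝ S ⊆ {v : X | g v < g w} :=
    convexHull_min (fun y hy => h y hy) hcv
  exact lt_irrefl (g w) (hsub hw)

/-- A nonzero Banach space `X` has the Daugavet property (every rank-one operator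
`z ↦ f z • y` with `f ≠ 0 ≠ y` satisfies `‖Id + T‖ = 1 + ‖T‖`) iff for every `x` in the
unit sphere and every `ε > 0` the closed unit ball is contained in the closure of the
convex hull of `l⁺(x, ε)`. -/
theorem daugavetProperty_iff_ball_subset_closure_convexHull_lPlus
    {X : Type*} [NormedAddCommGroup X] [NormedSpace ℝ X] [CompleteSpace X] [Nontrivial X] :
    (∀ (f : X →L[ℝ] ℝ) (y : X), f ≠ 0 → y ≠ 0 →
        ‖ContinuousLinearMap.id ℝ X + f.smulRight y‖ = 1 + ‖f.smulRight y‖) ↔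
    (∀ x : X, ‖x‖ = 1 → ∀ ε : ℝ, 0 < ε →
        Metric.closedBall (0 : X) 1 ⊆ closure (convexHull ℝ (lPlus x ε))) := by
  constructor
  · -- Daugavet ⟹ ball in closure of convex hull
    intro hD x hx ε hε b hb
    by_contra hnb
    have hconv : Convex ℝ (closure (convexHull ℝ (lPlus x ε))) :=
      (convex_convexHull ℝ _).closure
    obtain ⟨f, u, hfu, hub⟩ := geometric_hahn_banach_closed_point hconv isClosed_closure hnb
    have hxl : x ∈ lPlus x ε := by
      refine ⟨by rw [hx]; linarith, ?_⟩
      have h2 : x + x = (2:ℝ) • x := (two_smul ℝ x).symm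
      rw [h2, norm_smul, hx]
      simp only [Real.norm_eq_abs]
      rw [abs_of_nonneg (by norm_num : (0:ℝ) ≤ 2)]
      linarith
    have hxs : x ∈ closure (convexHull ℝ (lPlus x ε)) :=
      subset_closure (subset_convexHull ℝ _ hxl)
    have hfx : f x < u := hfu x hxs
    have hf0 : f ≠ 0 := by
      rintro rfl
      simp only [ContinuousLinearMap.zero_apply] at hfx hub
      linarith
    have hfpos : (0:ℝ) < ‖f‖ := norm_pos_iff.mpr hf0
    set g : X →L[ℝ] ℝ := ‖f‖⁻¹ • f with hgdef
    have hg : ‖g‖ = 1 := by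
      rw [hgdef, norm_smul (‖f‖⁻¹) f, norm_inv, norm_norm, inv_mul_cancel₀ hfpos.ne']
    set u' : ℝ := ‖f‖⁻¹ * u with hu'def
    have hgapp : ∀ w : X, g w = ‖f‖⁻¹ * f w := by
      intro w; rw [hgdef]; simp [smul_eq_mul]
    have hgs : ∀ a ∈ closure (convexHull ℝ (lPlus x ε)), g a < u' := by
      intro a ha
      have h3 := mul_lt_mul_of_pos_left (hfu a ha) (inv_pos.mpr hfpos)
      rw [hgapp]; exact h3
    have hgb : u' < g b := by
      have h3 := mul_lt_mul_of_pos_left hub (inv_pos.mpr hfpos)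
      rw [hgapp]; exact h3
    have hb1 : ‖b‖ ≤ 1 := by rwa [Metric.mem_closedBall, dist_zero_right] at hb
    have hu1 : u' < 1 := by
      have h4 : g b ≤ ‖g‖ * ‖b‖ := (le_abs_self _).trans (by rw [← Real.norm_eq_abs]; exact g.le_opNorm b)
      rw [hg, one_mul] at h4
      linarith
    set δ : ℝ := min (ε/2) (1 - u') with hδdef
    have hδpos : 0 < δ := lt_min (by linarith) (by linarith)
    have hδε : δ ≤ ε/2 := min_le_left _ _
    have hδu : δ ≤ 1 - u' := min_le_right _ _
    have hg0 : g ≠ 0 := by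
      intro h; rw [h, norm_zero] at hg; norm_num at hg
    have hx0 : x ≠ 0 := by
      intro h; rw [h, norm_zero] at hx; norm_num at hx
    have hDg := hD g x hg0 hx0
    rw [ContinuousLinearMap.norm_smulRight_apply, hg, hx, mul_one] at hDg
    have h2 : 2 - δ < ‖ContinuousLinearMap.id ℝ X + g.smulRight x‖ := by
      rw [hDg]; linarith
    obtain ⟨z, hz1, hz2⟩ :=
      (ContinuousLinearMap.id ℝ X + g.smulRight x).exists_lt_apply_of_lt_opNorm h2
    have happ : ∀ w : X, (ContinuousLinearMap.id ℝ X + g.smulRight x) w = w + g w • x := by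
      intro w
      simp [ContinuousLinearMap.add_apply]
    rw [happ] at hz2
    have habs : 1 - δ < |g z| := by
      have h5 : ‖z + g z • x‖ ≤ ‖z‖ + |g z| * ‖x‖ := by
        calc ‖z + g z • x‖ ≤ ‖z‖ + ‖g z • x‖ := norm_add_le _ _
        _ = ‖z‖ + |g z| * ‖x‖ := by rw [norm_smul, Real.norm_eq_abs]
      rw [hx, mul_one] at h5
      linarith
    obtain ⟨z', hz'1, hgz', hz'2⟩ :
        ∃ z' : X, ‖z'‖ ≤ 1 ∧ 1 - δ < g z' ∧ 2 - δ < ‖z' + g z' • x‖ := by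
      rcases le_or_gt 0 (g z) with hsign | hsign
      · exact ⟨z, hz1.le, by rwa [abs_of_nonneg hsign] at habs, hz2⟩
      · refine ⟨-z, by simpa using hz1.le, ?_, ?_⟩
        · rw [map_neg]; rwa [abs_of_neg hsign] at habs
        · rw [map_neg, neg_smul, show -z + -(g z • x) = -(z + g z • x) by abel, norm_neg]
          exact hz2
    have hgz1 : g z' ≤ 1 := by
      have h6 : g z' ≤ |g z'| := le_abs_self _
      have h7 : |g z'| ≤ ‖g‖ * ‖z'‖ := by
        rw [← Real.norm_eq_abs]; exact g.le_opNorm z'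
      rw [hg, one_mul] at h7
      linarith
    have hz'l : z' ∈ lPlus x ε := by
      refine ⟨by linarith, ?_⟩
      have h8 : ‖z' + g z' • x‖ ≤ ‖x + z'‖ + ‖(g z' - 1) • x‖ := by
        calc ‖z' + g z' • x‖ = ‖(x + z') + (g z' - 1) • x‖ := by
              rw [show (x + z') + (g z' - 1) • x = z' + g z' • x by module]
        _ ≤ _ := norm_add_le _ _
      rw [norm_smul, Real.norm_eq_abs, abs_of_nonpos (by linarith : g z' - 1 ≤ 0), hx,
        mul_one] at h8
      linarith
    have hcontra := hgs z' (subset_closure (subset_convexHull ℝ _ hz'l))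
    linarith
  · -- ball in closure of convex hull ⟹ Daugavet
    intro hB f y hf0 hy0
    have hnt : ‖f.smulRight y‖ = ‖f‖ * ‖y‖ := ContinuousLinearMap.norm_smulRight_apply f y
    set t : ℝ := ‖f‖ * ‖y‖ with htdef
    have hfpos : (0:ℝ) < ‖f‖ := norm_pos_iff.mpr hf0
    have hypos : (0:ℝ) < ‖y‖ := norm_pos_iff.mpr hy0
    have htpos : 0 < t := mul_pos hfpos hypos
    refine le_antisymm ?_ ?_
    · calc ‖ContinuousLinearMap.id ℝ X + f.smulRight y‖
          ≤ ‖ContinuousLinearMap.id ℝ X‖ + ‖f.smulRight y‖ := norm_add_le _ _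
      _ = 1 + ‖f.smulRight y‖ := by rw [ContinuousLinearMap.norm_id]
    · rw [hnt]
      set x : X := ‖y‖⁻¹ • y with hxdef
      have hxnorm : ‖x‖ = 1 := by
        rw [hxdef, norm_smul, norm_inv, norm_norm, inv_mul_cancel₀ hypos.ne']
      set g : X →L[ℝ] ℝ := ‖f‖⁻¹ • f with hgdef
      have hgnorm : ‖g‖ = 1 := by
        rw [hgdef, norm_smul (‖f‖⁻¹) f, norm_inv, norm_norm, inv_mul_cancel₀ hfpos.ne']
      have hgapp : ∀ w : X, g w = ‖f‖⁻¹ * f w := by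
        intro w; rw [hgdef]; simp [smul_eq_mul]
      have key : ∀ ε : ℝ, 0 < ε → ε < 1/2 →
          1 + t - (1 + 5*t) * ε ≤ ‖ContinuousLinearMap.id ℝ X + f.smulRight y‖ * (1 + ε) := by
        intro ε hεpos hε2
        have h1 : (1:ℝ) - ε < ‖g‖ := by rw [hgnorm]; linarith
        obtain ⟨z, hz1, hz2⟩ := g.exists_lt_apply_of_lt_opNorm h1
        rw [Real.norm_eq_abs] at hz2
        obtain ⟨z', hz'1, hz'2⟩ : ∃ z' : X, ‖z'‖ ≤ 1 ∧ 1 - ε < g z' := by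
          rcases le_or_gt 0 (g z) with hsign | hsign
          · exact ⟨z, hz1.le, by rwa [abs_of_nonneg hsign] at hz2⟩
          · exact ⟨-z, by simpa using hz1.le,
              by rw [map_neg]; rwa [abs_of_neg hsign] at hz2⟩
        have hmem : z' ∈ closure (convexHull ℝ (lPlus x ε)) := by
          apply hB x hxnorm ε hεpos
          rwa [Metric.mem_closedBall, dist_zero_right]
        obtain ⟨w, hw, hwz⟩ := Metric.mem_closure_iff.mp hmem ε hεpos
        have hgw : 1 - 2*ε < g w := by
          have h3 : |g z' - g w| ≤ ‖z' - w‖ := by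
            have h4 := g.le_opNorm (z' - w)
            rw [hgnorm, one_mul, map_sub, Real.norm_eq_abs] at h4
            exact h4
          rw [dist_eq_norm] at hwz
          have h5 := abs_le.mp h3
          linarith [h5.1]
        obtain ⟨y0, hy0l, hy0g⟩ := exists_ge_convexHull g hw
        obtain ⟨hy0n, hy0x⟩ := hy0l
        have hgy0 : 1 - 2*ε < g y0 := lt_of_lt_of_le hgw hy0g
        have hgy0u : g y0 ≤ 1 + ε := by
          have h6 : g y0 ≤ |g y0| := le_abs_self _
          have h7 : |g y0| ≤ ‖g‖ * ‖y0‖ := by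
            rw [← Real.norm_eq_abs]; exact g.le_opNorm y0
          rw [hgnorm, one_mul] at h7
          linarith
        set s : ℝ := t * g y0 with hsdef
        have hs0 : 0 ≤ s := mul_nonneg htpos.le (by linarith)
        have happ : (ContinuousLinearMap.id ℝ X + f.smulRight y) y0 = y0 + s • x := by
          have hsc : s • x = f y0 • y := by
            rw [hxdef, smul_smul, hsdef, hgapp, htdef]
            congr 1
            field_simp
          simp only [ContinuousLinearMap.add_apply, ContinuousLinearMap.id_apply,
            ContinuousLinearMap.smulRight_apply]
          rw [hsc]
        have hkey := lPlus_key hxnorm hy0n hy0x hs0 hεpos.le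
        have hb2 : ‖(ContinuousLinearMap.id ℝ X + f.smulRight y) y0‖ ≤
            ‖ContinuousLinearMap.id ℝ X + f.smulRight y‖ * ‖y0‖ :=
          (ContinuousLinearMap.id ℝ X + f.smulRight y).le_opNorm y0
        have hsl : t*(1-2*ε) ≤ s := by
          rw [hsdef]; nlinarith
        have hsu : s ≤ t*(1+ε) := by
          rw [hsdef]; nlinarith
        have hnorm_nonneg : 0 ≤ ‖ContinuousLinearMap.id ℝ X + f.smulRight y‖ := norm_nonneg _
        calc 1 + t - (1 + 5*t) * ε ≤ 1 + s - (1 + 2*s)*ε := by nlinarith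
        _ ≤ ‖y0 + s • x‖ := hkey
        _ = ‖(ContinuousLinearMap.id ℝ X + f.smulRight y) y0‖ := by rw [happ]
        _ ≤ ‖ContinuousLinearMap.id ℝ X + f.smulRight y‖ * ‖y0‖ := hb2
        _ ≤ ‖ContinuousLinearMap.id ℝ X + f.smulRight y‖ * (1 + ε) := by
            apply mul_le_mul_of_nonneg_left hy0n hnorm_nonneg
      have h1 : Filter.Tendsto (fun ε : ℝ => 1 + t - (1 + 5*t)*ε)
          (nhdsWithin 0 (Set.Ioi 0)) (nhds (1 + t)) := by
        have hc : Continuous fun ε : ℝ => 1 + t - (1 + 5*t)*ε :=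
          continuous_const.sub (continuous_const.mul continuous_id)
        have h : Filter.Tendsto (fun ε : ℝ => 1 + t - (1 + 5*t)*ε)
            (nhdsWithin 0 (Set.Ioi 0)) (nhds (1 + t - (1 + 5*t)*0)) :=
          (hc.tendsto 0).mono_left nhdsWithin_le_nhds
        simpa using h
      have h2 : Filter.Tendsto
          (fun ε : ℝ => ‖ContinuousLinearMap.id ℝ X + f.smulRight y‖ * (1 + ε))
          (nhdsWithin 0 (Set.Ioi 0))
          (nhds ‖ContinuousLinearMap.id ℝ X + f.smulRight y‖) := by
        have hc : Continuous fun ε : ℝ =>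
            ‖ContinuousLinearMap.id ℝ X + f.smulRight y‖ * (1 + ε) :=
          continuous_const.mul (continuous_const.add continuous_id)
        have h : Filter.Tendsto
            (fun ε : ℝ => ‖ContinuousLinearMap.id ℝ X + f.smulRight y‖ * (1 + ε))
            (nhdsWithin 0 (Set.Ioi 0))
            (nhds (‖ContinuousLinearMap.id ℝ X + f.smulRight y‖ * (1 + 0))) :=
          (hc.tendsto 0).mono_left nhdsWithin_le_nhds
        simpa using h
      refine le_of_tendsto_of_tendsto h1 h2 ?_
      filter_upwards [Ioo_mem_nhdsGT_of_mem
        (by constructor <;> norm_num : (0:ℝ) ∈ Set.Ico 0 (1/2))] with ε hε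
      exact key ε hε.1 hε.2
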